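/- Let n ≥ 3 be a natural number and consider a connected Feynman graph with L loops, I internal gauge edges, Ĩ internal ghost edges, E external gauge edges, Ẽ external ghost edges, v_i gauge vertices of valence i for 3 ≤ i ≤ n, and ṽ ghost-gauge vertices. Assume the half-edge counting relations 2I + E = Σ_i i·v_i + ṽ and 2Ĩ + Ẽ = 2ṽ, and Euler's formula L = I + Ĩ − Σ_i v_i − ṽ + 1. Then the superficial degree of divergence ω := 4L − I(n−2) − Ĩ(n−2) + Σ_{i=3}^n v_i(n−i) + ṽ(n−3) equals (4−n)(L−1) + 4 − (E+Ẽ). -/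

import Mathlib

/-! Euler's formula turns `ω` into `(4 - n)(L - 1) + 4 + 2(I + Ĩ) - (∑ i vᵢ + 3ṽ)`: twice the
number of internal edges minus the number of half-edges at vertices (a ghost-gauge vertex
carries three). By the two half-edge counts this difference is `-(E + Ẽ)`. -/

theorem Finset.sum_mul_const_sub {ι R : Type*} [CommRing R] (s : Finset ι) (f g : ι → R)
    (c : R) :
    ∑ i ∈ s, f i * (c - g i) = c * ∑ i ∈ s, f i - ∑ i ∈ s, g i * f i := by
  rw [Finset.mul_sum, ← Finset.sum_sub_distrib]
  exact Finset.sum_congr rfl fun i _ => by ring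

theorem superficial_degree_of_divergence_general (n : ℕ)
    (L I Itil E Etil vtil : ℕ) (v : ℕ → ℕ)
    (h_gauge_half_edges : 2 * I + E = (∑ i ∈ Finset.Icc 3 n, i * v i) + vtil)
    (h_ghost_half_edges : 2 * Itil + Etil = 2 * vtil)
    (h_euler : (L : ℤ) = (I : ℤ) + (Itil : ℤ)
      - (∑ i ∈ Finset.Icc 3 n, (v i : ℤ)) - (vtil : ℤ) + 1) :
    (4 * (L : ℤ) - (I : ℤ) * ((n : ℤ) - 2) - (Itil : ℤ) * ((n : ℤ) - 2)
        + (∑ i ∈ Finset.Icc 3 n, (v i : ℤ) * ((n : ℤ) - (i : ℤ)))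
        + (vtil : ℤ) * ((n : ℤ) - 3))
      = (4 - (n : ℤ)) * ((L : ℤ) - 1) + 4 - ((E : ℤ) + (Etil : ℤ)) := by
  have h_gauge : (2 * I + E : ℤ) = ∑ i ∈ Finset.Icc 3 n, (i : ℤ) * v i + vtil := by
    exact_mod_cast h_gauge_half_edges
  have h_ghost : (2 * Itil + Etil : ℤ) = 2 * vtil := by exact_mod_cast h_ghost_half_edges
  rw [Finset.sum_mul_const_sub]
  linear_combination h_gauge + h_ghost + (n : ℤ) * h_euler

/-- Power-counting lemma: for a connected graph with `L` loops, `I` internal gauge edges,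
`Ĩ` internal ghost edges, `E`/`Ẽ` external gauge/ghost edges, `v i` gauge vertices of
valence `i` (`3 ≤ i ≤ n`) and `ṽ` ghost-gauge vertices, satisfying the half-edge counting
relations and Euler's formula, the superficial degree of divergence
`ω = 4L − I(n−2) − Ĩ(n−2) + Σᵢ vᵢ(n−i) + ṽ(n−3)` equals `(4−n)(L−1) + 4 − (E+Ẽ)`. -/
theorem superficial_degree_of_divergence (n : ℕ) (hn : 3 ≤ n)
    (L I Itil E Etil vtil : ℕ) (v : ℕ → ℕ)
    (h_gauge_half_edges : 2 * I + E = (∑ i ∈ Finset.Icc 3 n, i * v i) + vtil)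
    (h_ghost_half_edges : 2 * Itil + Etil = 2 * vtil)
    (h_euler : (L : ℤ) = (I : ℤ) + (Itil : ℤ)
      - (∑ i ∈ Finset.Icc 3 n, (v i : ℤ)) - (vtil : ℤ) + 1) :
    (4 * (L : ℤ) - (I : ℤ) * ((n : ℤ) - 2) - (Itil : ℤ) * ((n : ℤ) - 2)
        + (∑ i ∈ Finset.Icc 3 n, (v i : ℤ) * ((n : ℤ) - (i : ℤ)))
        + (vtil : ℤ) * ((n : ℤ) - 3))
      = (4 - (n : ℤ)) * ((L : ℤ) - 1) + 4 - ((E : ℤ) + (Etil : ℤ)) :=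
  superficial_degree_of_divergence_general n L I Itil E Etil vtil v h_gauge_half_edges
    h_ghost_half_edges h_euler
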